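/- Let V be a finite-dimensional real vector space of dimension N and W a k-dimensional linear subspace of the space of symmetric bilinear forms on V. Then Y_W^ns, with the subspace topology induced from V, is a topological manifold of dimension N − k: every point of Y_W^ns has an open neighborhood in Y_W^ns that is homeomorphic to an open subset of ℝ^{N−k}. -/

import Mathlib

/-!
Choose a basis `ℓ₁, …, ℓ_k` of `W`. Then `Y_W` is the zero set of the quadratic map
`Q v = (ℓᵢ(v, v))ᵢ : V → ℝᵏ`, whose derivative at `a` is `u ↦ 2 (ℓᵢ(a, u))ᵢ` by symmetry.
A vector `a` is a null vector of no nonzero form of `W` exactly when the functionals `ℓᵢ(a, ·)`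
are linearly independent, i.e. when `dQ(a)` is surjective, and this is an open condition.
Hence near a point of `Y_W^ns` the set `Y_W^ns` is just `Q⁻¹(0)`, and the implicit function
theorem maps it homeomorphically onto an open subset of `ker dQ(a) ≅ ℝ^(N-k)`.
-/

open Module

/-- `Y_W^{ns}`: the vectors at which all forms of `W` vanish and which are not null vectors of
any nonzero form of `W`. -/
def YWns {V : Type*} [AddCommGroup V] [Module ℝ V]
    (W : Submodule ℝ (V →ₗ[ℝ] V →ₗ[ℝ] ℝ)) : Set V :=
  {v | (∀ w ∈ W, w v v = 0) ∧ ∀ w ∈ W, w ≠ 0 → ∃ u, w v u ≠ 0}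

open Filter Topology

def HasLocalChartAt (G : Type*) [TopologicalSpace G] {X : Type*} [TopologicalSpace X] (x : X) :
    Prop :=
  ∃ U : Set X, IsOpen U ∧ x ∈ U ∧ ∃ O : Set G, IsOpen O ∧ Nonempty (U ≃ₜ O)

theorem HasLocalChartAt.trans_homeomorph {G G' X : Type*} [TopologicalSpace G]
    [TopologicalSpace G'] [TopologicalSpace X] {x : X} (h : HasLocalChartAt G x) (e : G ≃ₜ G') :
    HasLocalChartAt G' x := by
  obtain ⟨U, hU, hxU, O, hO, ⟨φ⟩⟩ := h
  exact ⟨U, hU, hxU, e '' O, e.isOpenMap O hO, ⟨φ.trans (e.image O)⟩⟩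

namespace OpenPartialHomeomorph

variable {X A B : Type*} [TopologicalSpace X] [TopologicalSpace A] [TopologicalSpace B]
  (e : OpenPartialHomeomorph X (A × B)) {Y : Set X} {c : A}

theorem eq_mk_snd_of_mem_slice (hY : ∀ x ∈ e.source, x ∈ Y ↔ (e x).1 = c) {x : X}
    (hx : x ∈ e.source) (hxY : x ∈ Y) : e x = (c, (e x).2) :=
  Prod.ext ((hY x hx).1 hxY) rfl

def sliceHomeomorph (hY : ∀ x ∈ e.source, x ∈ Y ↔ (e x).1 = c) :
    {y : Y | (y : X) ∈ e.source} ≃ₜ {b : B | (c, b) ∈ e.target} where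
  toFun y := ⟨(e y).2, by
    simpa [← e.eq_mk_snd_of_mem_slice hY y.2 y.1.2] using e.map_source y.2⟩
  invFun b := ⟨⟨e.symm (c, b), (hY _ (e.map_target b.2)).2 (by rw [e.right_inv b.2])⟩,
    e.map_target b.2⟩
  left_inv y := by
    ext
    simp [← e.eq_mk_snd_of_mem_slice hY y.2 y.1.2, e.left_inv y.2]
  right_inv b := by
    ext
    simp [e.right_inv b.2]
  continuous_toFun := by
    refine Continuous.subtype_mk (continuous_snd.comp ?_) _
    exact e.continuousOn.comp_continuous (continuous_subtype_val.comp continuous_subtype_val)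
      fun y => y.2
  continuous_invFun := by
    refine (Continuous.subtype_mk ?_ _).subtype_mk _
    exact e.symm.continuousOn.comp_continuous
      ((Continuous.prodMk_right c).comp continuous_subtype_val) fun b => b.2

theorem hasLocalChartAt_of_slice (hY : ∀ x ∈ e.source, x ∈ Y ↔ (e x).1 = c) {y : Y}
    (hy : (y : X) ∈ e.source) : HasLocalChartAt B y :=
  ⟨_, e.open_source.preimage continuous_subtype_val, hy,
    _, e.open_target.preimage (Continuous.prodMk_right c), ⟨e.sliceHomeomorph hY⟩⟩

end OpenPartialHomeomorph

section Calculus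

variable {𝕜 E F : Type*} [NontriviallyNormedField 𝕜]
  [NormedAddCommGroup E] [NormedSpace 𝕜 E] [NormedAddCommGroup F] [NormedSpace 𝕜 F]

theorem HasStrictFDerivAt.hasLocalChartAt_of_eventually_mem_iff [CompleteSpace 𝕜]
    [CompleteSpace E] [FiniteDimensional 𝕜 F] {f : E → F} {f' : E →L[𝕜] F} {a : E}
    (hf : HasStrictFDerivAt f f' a) (hf' : (f' : E →ₗ[𝕜] F).range = ⊤) {Y : Set E}
    (hY : ∀ᶠ x in 𝓝 a, x ∈ Y ↔ f x = 0) (ha : a ∈ Y) :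
    HasLocalChartAt (f' : E →ₗ[𝕜] F).ker (⟨a, ha⟩ : Y) := by
  obtain ⟨S, hYS, hS, haS⟩ := mem_nhds_iff.1 hY
  let e := (hf.implicitToOpenPartialHomeomorph f f' hf').restrOpen S hS
  exact e.hasLocalChartAt_of_slice (c := 0) (fun x hx => hYS hx.2)
    ⟨hf.mem_implicitToOpenPartialHomeomorph_source hf', haS⟩

theorem ContinuousLinearMap.hasStrictFDerivAt_apply_self_of_symm (B : E →L[𝕜] E →L[𝕜] F)
    (hB : ∀ u v, B u v = B v u) (a : E) :
    HasStrictFDerivAt (fun v => B v v) ((2 : 𝕜) • B a) a := by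
  refine (B.hasStrictFDerivAt_of_bilinear (hasStrictFDerivAt_id a)
    (hasStrictFDerivAt_id a)).congr_fderiv ?_
  ext u
  simp [ContinuousLinearMap.precompR, ContinuousLinearMap.precompL, hB u a, two_smul]

end Calculus

theorem Module.Basis.linearIndependent_comp_iff_injective {ι R M N : Type*} [CommSemiring R]
    [AddCommMonoid M] [Module R M] [AddCommMonoid N] [Module R N] (b : Basis ι R M)
    (g : M →ₗ[R] N) : LinearIndependent R (g ∘ b) ↔ Function.Injective g :=
  ⟨fun h => b.constr_self ℕ g ▸ b.injective_constr_of_linearIndependent h,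
    fun h => (g.linearIndependent_iff_of_injOn h.injOn).2 b.linearIndependent⟩

theorem Module.Basis.linearIndependent_map_iff {ι R M N : Type*} [CommRing R]
    [AddCommGroup M] [Module R M] [AddCommGroup N] [Module R N] {W : Submodule R M}
    (b : Basis ι R W) (φ : M →ₗ[R] N) :
    LinearIndependent R (fun i => φ (b i)) ↔ ∀ w ∈ W, φ w = 0 → w = 0 := by
  refine (b.linearIndependent_comp_iff_injective (φ ∘ₗ W.subtype)).trans ?_
  rw [injective_iff_map_eq_zero]
  simp [Subtype.forall]

theorem Module.Basis.forall_mem_eq_zero_iff {ι R M N : Type*} [Semiring R]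
    [AddCommMonoid M] [Module R M] [AddCommMonoid N] [Module R N] {W : Submodule R M}
    (b : Basis ι R W) (φ : M →ₗ[R] N) : (∀ w ∈ W, φ w = 0) ↔ ∀ i, φ (b i) = 0 := by
  refine ⟨fun h i => h _ (b i).2, fun h w hw => ?_⟩
  have : φ ∘ₗ W.subtype = 0 := b.ext h
  exact LinearMap.congr_fun this ⟨w, hw⟩

theorem Submodule.nonempty_basis_of_finrank_eq {K M : Type*} [DivisionRing K] [AddCommGroup M]
    [Module K M] [FiniteDimensional K M] (W : Submodule K M) {k : ℕ} (h : finrank K W = k) :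
    Nonempty (Basis (Fin k) K W) :=
  ⟨finBasisOfFinrankEq K W h⟩

theorem LinearMap.finrank_ker_of_range_eq_top {K V V₂ : Type*} [DivisionRing K]
    [AddCommGroup V] [Module K V] [FiniteDimensional K V] [AddCommGroup V₂] [Module K V₂]
    {f : V →ₗ[K] V₂} (hf : range f = ⊤) : finrank K (ker f) = finrank K V - finrank K V₂ := by
  have := finrank_range_add_finrank_ker f
  rw [hf, finrank_top] at this
  omega

theorem LinearMap.surjective_pi_iff_linearIndependent {ι K V : Type*} [Finite ι] [Field K]
    [AddCommGroup V] [Module K V] (f : ι → V →ₗ[K] K) :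
    Function.Surjective (LinearMap.pi f) ↔ LinearIndependent K f := by
  rw [← (LinearMap.ltoFun K V K K).linearIndependent_iff (ker_eq_bot.2 DFunLike.coe_injective),
    ← span_flip_eq_top_iff_linearIndependent, ← range_eq_top]
  congr!
  rw [← Submodule.span_eq (pi f).range, LinearMap.coe_range]
  rfl

theorem isOpen_setOf_linearIndependent_apply {ι 𝕜 E F G : Type*} [Finite ι]
    [NontriviallyNormedField 𝕜] [CompleteSpace 𝕜]
    [NormedAddCommGroup E] [NormedSpace 𝕜 E] [FiniteDimensional 𝕜 E]
    [NormedAddCommGroup F] [NormedSpace 𝕜 F] [FiniteDimensional 𝕜 F]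
    [NormedAddCommGroup G] [NormedSpace 𝕜 G] (ℓ : ι → E →ₗ[𝕜] F →ₗ[𝕜] G) :
    IsOpen {v | LinearIndependent 𝕜 fun i => ℓ i v} := by
  let e : (F →ₗ[𝕜] G) ≃ₗ[𝕜] F →L[𝕜] G := LinearMap.toContinuousLinearMap
  have h (v : E) : LinearIndependent 𝕜 (fun i => ℓ i v) ↔
      LinearIndependent 𝕜 (fun i => (ℓ i).toContinuousBilinearMap v) :=
    (e.toLinearMap.linearIndependent_iff e.ker).symm
  simp only [h]
  exact isOpen_setOfPred_linearIndependent.preimage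
    (continuous_pi fun i => (ℓ i).toContinuousBilinearMap.continuous)

def LinearMap.pi₂ {ι R M N P : Type*} [CommSemiring R] [AddCommMonoid M] [Module R M]
    [AddCommMonoid N] [Module R N] [AddCommMonoid P] [Module R P]
    (f : ι → M →ₗ[R] N →ₗ[R] P) : M →ₗ[R] N →ₗ[R] ι → P :=
  LinearMap.mk₂ R (fun m n i => f i m n) (fun _ _ _ => by ext; simp) (fun _ _ _ => by ext; simp)
    (fun _ _ _ => by ext; simp) (fun _ _ _ => by ext; simp)

section BasisOfForms

variable {ι R V : Type*} [CommRing R] [AddCommGroup V] [Module R V]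
  {W : Submodule R (V →ₗ[R] V →ₗ[R] R)} (b : Basis ι R W) (v : V)

theorem Module.Basis.forall_mem_apply_self_eq_zero_iff :
    (∀ w ∈ W, w v v = 0) ↔ ∀ i, (b i : V →ₗ[R] V →ₗ[R] R) v v = 0 :=
  b.forall_mem_eq_zero_iff (LinearMap.applyₗ v ∘ₗ LinearMap.applyₗ v)

theorem Module.Basis.linearIndependent_apply_iff :
    LinearIndependent R (fun i => (b i : V →ₗ[R] V →ₗ[R] R) v) ↔
      ∀ w ∈ W, w ≠ 0 → ∃ u, w v u ≠ 0 := by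
  have h := b.linearIndependent_map_iff (N := V →ₗ[R] R) (LinearMap.applyₗ v)
  simp only [LinearMap.applyₗ_apply_apply] at h
  rw [h]
  refine forall₂_congr fun w _ => ?_
  rw [not_imp_comm, ← not_forall, not_not]
  exact imp_congr_left LinearMap.ext_iff

end BasisOfForms

theorem YWns_is_topological_manifold
    {V : Type*} [NormedAddCommGroup V] [NormedSpace ℝ V] [FiniteDimensional ℝ V]
    (N k : ℕ) (hN : finrank ℝ V = N)
    (W : Submodule ℝ (V →ₗ[ℝ] V →ₗ[ℝ] ℝ))
    (hsymm : ∀ w ∈ W, ∀ u v : V, w u v = w v u)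
    (hdimW : finrank ℝ W = k) :
    ∀ x : YWns W, ∃ U : Set (YWns W), IsOpen U ∧ x ∈ U ∧
      ∃ O : Set (EuclideanSpace ℝ (Fin (N - k))), IsOpen O ∧ Nonempty (U ≃ₜ O) := by
  obtain ⟨b⟩ := Submodule.nonempty_basis_of_finrank_eq (M := V →ₗ[ℝ] V →ₗ[ℝ] ℝ) W hdimW
  let ℓ i : V →ₗ[ℝ] V →ₗ[ℝ] ℝ := b i
  let B := (LinearMap.pi₂ ℓ).toContinuousBilinearMap
  rintro ⟨a, ha⟩
  have hli : LinearIndependent ℝ fun i => ℓ i a := (b.linearIndependent_apply_iff a).2 ha.2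
  have hf : HasStrictFDerivAt (fun v => B v v) ((2 : ℝ) • B a) a :=
    B.hasStrictFDerivAt_apply_self_of_symm (fun u v => funext fun i => hsymm _ (b i).2 u v) a
  have hsurj : (((2 : ℝ) • B a : V →L[ℝ] Fin k → ℝ) : V →ₗ[ℝ] Fin k → ℝ).range = ⊤ := by
    rw [ContinuousLinearMap.toLinearMap_smul, LinearMap.range_smul _ _ two_ne_zero,
      LinearMap.range_eq_top]
    exact (LinearMap.surjective_pi_iff_linearIndependent _).2 hli
  have hY : ∀ᶠ v in 𝓝 a, v ∈ YWns W ↔ B v v = 0 := by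
    filter_upwards [(isOpen_setOf_linearIndependent_apply ℓ).mem_nhds hli] with v hv
    exact (and_iff_left ((b.linearIndependent_apply_iff v).1 hv)).trans
      ((b.forall_mem_apply_self_eq_zero_iff v).trans funext_iff.symm)
  have hker : finrank ℝ (((2 : ℝ) • B a : V →L[ℝ] Fin k → ℝ) : V →ₗ[ℝ] Fin k → ℝ).ker =
      finrank ℝ (EuclideanSpace ℝ (Fin (N - k))) := by
    rw [LinearMap.finrank_ker_of_range_eq_top hsurj, hN, finrank_fin_fun,
      finrank_euclideanSpace_fin]
  exact (hf.hasLocalChartAt_of_eventually_mem_iff hsurj hY ha).trans_homeomorph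
    (ContinuousLinearEquiv.ofFinrankEq hker).toHomeomorph
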